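/- For all real α, β > 1/2, the multivariate Beta function satisfies B₂(α, β+1) = (β(β−1/2))/((α+β)(α+β−1/2)) · B₂(α, β). -/

import Mathlib

open MeasureTheory Real Filter Finset

def Omega : Set (ℝ × ℝ × ℝ) :=
  {p | 0 < p.1 ∧ 0 < 1 - p.1 ∧ 0 < p.1 * p.2.1 - p.2.2 ^ 2 ∧
    0 < (1 - p.1) * (1 - p.2.1) - p.2.2 ^ 2}

noncomputable def betaDens (α β : ℝ) (p : ℝ × ℝ × ℝ) : ℝ :=
  ((1 - p.1) * (1 - p.2.1) - p.2.2 ^ 2) ^ (α - 3/2) *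
    (p.1 * p.2.1 - p.2.2 ^ 2) ^ (β - 3/2)

noncomputable def B2 (α β : ℝ) : ℝ := ∫ p in Omega, betaDens α β p

noncomputable def Eab (α β : ℝ) (f : ℝ × ℝ × ℝ → ℝ) : ℝ :=
  (B2 α β)⁻¹ * ∫ p in Omega, f p * betaDens α β p

/-!
Write `w = [[x, z], [z, y]]` and integrate over `y` and `z` first, with `0 < x < 1` fixed.
The shear `y = c + z² / x` turns `det w` into `x c` and `det (I - w)` into
`(1 - x)(1 - c) - z² / x`; the scaling `z = √(x (1 - x) (1 - c)) s` then separates the variables,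
and `B₂(α, β) = C(α) B(β, α) B(β - 1/2, α)` with the one-dimensional Beta function `B` and a
factor `C(α) = ∫ (1 - s²)₊^(α - 3/2) ds` that does not depend on `β`. The recursion follows from
`B(a + 1, b) = a / (a + b) · B(a, b)`.

All integrals are computed in `ℝ≥0∞`, with the truncated power `t₊ ^ γ`, so that Tonelli and the
substitutions need no integrability side conditions.
-/

open ProbabilityTheory
open scoped ENNReal

noncomputable def posRpow (γ t : ℝ) : ℝ≥0∞ := if 0 < t then ENNReal.ofReal (t ^ γ) else 0

@[fun_prop]
lemma measurable_posRpow (γ : ℝ) : Measurable (posRpow γ) :=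
  Measurable.ite (measurableSet_lt measurable_const measurable_id) (by fun_prop) measurable_const

lemma posRpow_of_pos {γ t : ℝ} (ht : 0 < t) : posRpow γ t = ENNReal.ofReal (t ^ γ) := if_pos ht

lemma posRpow_of_nonpos {γ t : ℝ} (ht : t ≤ 0) : posRpow γ t = 0 := if_neg ht.not_gt

lemma posRpow_mul {γ s : ℝ} (hs : 0 < s) (t : ℝ) :
    posRpow γ (s * t) = ENNReal.ofReal (s ^ γ) * posRpow γ t := by
  rcases lt_or_ge 0 t with ht | ht
  · rw [posRpow_of_pos (mul_pos hs ht), posRpow_of_pos ht, mul_rpow hs.le ht.le,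
      ENNReal.ofReal_mul (by positivity)]
  · rw [posRpow_of_nonpos (mul_nonpos_of_nonneg_of_nonpos hs.le ht), posRpow_of_nonpos ht,
      mul_zero]

noncomputable def betaLIntegral (a b : ℝ) : ℝ≥0∞ :=
  ∫⁻ t, posRpow (a - 1) t * posRpow (b - 1) (1 - t)

lemma betaLIntegral_eq {a b : ℝ} (ha : 0 < a) (hb : 0 < b) :
    betaLIntegral a b = ENNReal.ofReal (beta a b) := by
  have hB := beta_pos ha hb
  have hpdf : ∀ t, betaPDF a b t
      = ENNReal.ofReal (beta a b)⁻¹ * (posRpow (a - 1) t * posRpow (b - 1) (1 - t)) := by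
    intro t
    by_cases ht : 0 < t ∧ t < 1
    · rw [betaPDF_of_pos_lt_one ht.1 ht.2, posRpow_of_pos ht.1, posRpow_of_pos (by linarith),
        ← ENNReal.ofReal_mul (rpow_nonneg ht.1.le _), ← ENNReal.ofReal_mul (inv_nonneg.2 hB.le),
        one_div, mul_assoc]
    · rw [not_and_or, not_lt, not_lt] at ht
      rcases ht with ht | ht
      · rw [betaPDF_eq_zero_of_nonpos ht, posRpow_of_nonpos ht, zero_mul, mul_zero]
      · rw [betaPDF_eq_zero_of_one_le ht, posRpow_of_nonpos (t := 1 - t) (by linarith),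
          mul_zero, mul_zero]
  have h := lintegral_betaPDF_eq_one ha hb
  rw [lintegral_congr hpdf, lintegral_const_mul _ (by fun_prop),
    ENNReal.ofReal_inv_of_pos hB, mul_comm] at h
  rw [betaLIntegral, ENNReal.eq_inv_of_mul_eq_one_left h, inv_inv]

lemma beta_add_one_left {a b : ℝ} (ha : 0 < a) (hb : 0 < b) :
    beta (a + 1) b = a / (a + b) * beta a b := by
  have hab : 0 < a + b := by positivity
  rw [beta, beta, Real.Gamma_add_one ha.ne', add_right_comm, Real.Gamma_add_one hab.ne']
  have := (Real.Gamma_pos_of_pos hab).ne'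
  field_simp

lemma lintegral_comp_mul_left (g : ℝ → ℝ≥0∞) {a : ℝ} (ha : a ≠ 0) :
    ∫⁻ x, g (a * x) = ENNReal.ofReal |a⁻¹| * ∫⁻ y, g y := by
  rw [← (measurableEmbedding_mulLeft₀ ha).lintegral_map,
    Real.map_volume_mul_left ha, lintegral_smul_measure, smul_eq_mul]

noncomputable def oneSubSqLIntegral (γ : ℝ) : ℝ≥0∞ := ∫⁻ s, posRpow γ (1 - s ^ 2)

lemma lintegral_posRpow_sub_sq_div (γ a : ℝ) {b : ℝ} (hb : 0 < b) :
    ∫⁻ z, posRpow γ (a - z ^ 2 / b)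
      = ENNReal.ofReal (√b) * posRpow (γ + 1/2) a * oneSubSqLIntegral γ := by
  rcases le_or_gt a 0 with ha | ha
  · have hz : ∀ z, a - z ^ 2 / b ≤ 0 := fun z => by
      have : 0 ≤ z ^ 2 / b := by positivity
      linarith
    simp only [posRpow_of_nonpos (hz _), posRpow_of_nonpos ha, lintegral_zero, mul_zero, zero_mul]
  set r := √(a * b) with hr
  have hr0 : 0 < r := by positivity
  have hsub : ∀ s, a - (r * s) ^ 2 / b = a * (1 - s ^ 2) := fun s => by
    rw [mul_pow, hr, sq_sqrt (by positivity)]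
    field_simp
  have hconst : r * a ^ γ = √b * a ^ (γ + 1/2) := by
    rw [hr, sqrt_mul ha.le, sqrt_eq_rpow, rpow_add ha]
    ring
  calc ∫⁻ z, posRpow γ (a - z ^ 2 / b)
      = ENNReal.ofReal r * ∫⁻ s, posRpow γ (a - (r * s) ^ 2 / b) := by
        rw [lintegral_comp_mul_left (fun z => posRpow γ (a - z ^ 2 / b)) hr0.ne', ← mul_assoc,
          ← ENNReal.ofReal_mul hr0.le, abs_of_pos (inv_pos.2 hr0), mul_inv_cancel₀ hr0.ne',
          ENNReal.ofReal_one, one_mul]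
    _ = ENNReal.ofReal r * (ENNReal.ofReal (a ^ γ) * oneSubSqLIntegral γ) := by
        simp_rw [hsub, posRpow_mul ha]
        rw [lintegral_const_mul _ (by fun_prop), oneSubSqLIntegral]
    _ = ENNReal.ofReal (√b) * posRpow (γ + 1/2) a * oneSubSqLIntegral γ := by
        rw [posRpow_of_pos ha, ← mul_assoc, ← ENNReal.ofReal_mul hr0.le, hconst,
          ENNReal.ofReal_mul (sqrt_nonneg _)]

lemma lintegral_shear (f : ℝ → ℝ → ℝ≥0∞) {x : ℝ} (hx : x ≠ 0) (z : ℝ) :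
    ∫⁻ y, f (x * y - z ^ 2) ((1 - x) * (1 - y) - z ^ 2)
      = ∫⁻ c, f (x * c) ((1 - x) * (1 - c) - z ^ 2 / x) := by
  rw [← lintegral_add_right_eq_self _ (z ^ 2 / x)]
  congr 1 with c
  congr 1 <;> field_simp <;> ring

lemma lintegral_lintegral_posRpow_det (α β : ℝ) {x : ℝ} (hx0 : 0 < x) (hx1 : x < 1) :
    ∫⁻ y, ∫⁻ z, posRpow (α - 3/2) ((1 - x) * (1 - y) - z ^ 2) * posRpow (β - 3/2) (x * y - z ^ 2)
      = ENNReal.ofReal (x ^ (β - 1) * (1 - x) ^ (α - 1))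
          * (oneSubSqLIntegral (α - 3/2) * betaLIntegral (β - 1/2) α) := by
  have h1x : 0 < 1 - x := by linarith
  have hz := fun a => lintegral_posRpow_sub_sq_div (α - 3/2) a hx0
  simp_rw [show α - 3/2 + 1/2 = α - 1 by ring] at hz
  have hconst : ENNReal.ofReal (√x) * ENNReal.ofReal ((1 - x) ^ (α - 1))
        * ENNReal.ofReal (x ^ (β - 3/2))
      = ENNReal.ofReal (x ^ (β - 1) * (1 - x) ^ (α - 1)) := by
    rw [← ENNReal.ofReal_mul (by positivity), ← ENNReal.ofReal_mul (by positivity)]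
    congr 1
    rw [sqrt_eq_rpow, show β - 1 = 1/2 + (β - 3/2) by ring, rpow_add hx0]
    ring
  calc ∫⁻ y, ∫⁻ z,
        posRpow (α - 3/2) ((1 - x) * (1 - y) - z ^ 2) * posRpow (β - 3/2) (x * y - z ^ 2)
      = ∫⁻ z, ∫⁻ y,
        posRpow (α - 3/2) ((1 - x) * (1 - y) - z ^ 2) * posRpow (β - 3/2) (x * y - z ^ 2) :=
        lintegral_lintegral_swap (by fun_prop)
    _ = ∫⁻ z, ∫⁻ c,
        posRpow (α - 3/2) ((1 - x) * (1 - c) - z ^ 2 / x) * posRpow (β - 3/2) (x * c) := by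
        congr 1 with z
        exact lintegral_shear (fun u v => posRpow (α - 3/2) v * posRpow (β - 3/2) u) hx0.ne' z
    _ = ∫⁻ c, ∫⁻ z,
        posRpow (α - 3/2) ((1 - x) * (1 - c) - z ^ 2 / x) * posRpow (β - 3/2) (x * c) :=
        lintegral_lintegral_swap (by fun_prop)
    _ = ∫⁻ c, ENNReal.ofReal (√x) * posRpow (α - 1) ((1 - x) * (1 - c))
          * oneSubSqLIntegral (α - 3/2) * posRpow (β - 3/2) (x * c) := by
        congr 1 with c
        rw [lintegral_mul_const _ (by fun_prop), hz]
    _ = ∫⁻ c, ENNReal.ofReal (x ^ (β - 1) * (1 - x) ^ (α - 1)) * oneSubSqLIntegral (α - 3/2)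
          * (posRpow (β - 1/2 - 1) c * posRpow (α - 1) (1 - c)) := by
        congr 1 with c
        rw [posRpow_mul h1x, posRpow_mul hx0, ← hconst, show β - 1/2 - 1 = β - 3/2 by ring]
        ring
    _ = _ := by
        rw [lintegral_const_mul _ (by fun_prop), betaLIntegral, mul_assoc]

lemma lintegral_prod_prod {X Y Z : Type*} [MeasureSpace X] [MeasureSpace Y] [MeasureSpace Z]
    [SFinite (volume : Measure Y)] [SFinite (volume : Measure Z)]
    {f : X × Y × Z → ℝ≥0∞} (hf : Measurable f) :
    ∫⁻ p, f p = ∫⁻ x, ∫⁻ y, ∫⁻ z, f (x, y, z) := by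
  rw [Measure.volume_eq_prod, lintegral_prod _ hf.aemeasurable]
  congr 1 with x
  rw [Measure.volume_eq_prod]
  exact lintegral_prod (fun q => f (x, q)) (hf.comp measurable_prodMk_left).aemeasurable

lemma measurableSet_Omega : MeasurableSet Omega := by
  unfold Omega
  measurability

@[fun_prop]
lemma measurable_betaDens (α β : ℝ) : Measurable (betaDens α β) := by
  unfold betaDens
  fun_prop

lemma indicator_Omega_betaDens {α β x : ℝ} (hx0 : 0 < x) (hx1 : x < 1) (y z : ℝ) :
    Omega.indicator (fun p => ENNReal.ofReal (betaDens α β p)) (x, y, z)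
      = posRpow (α - 3/2) ((1 - x) * (1 - y) - z ^ 2) * posRpow (β - 3/2) (x * y - z ^ 2) := by
  by_cases h : (x, y, z) ∈ Omega
  · rw [Set.indicator_of_mem h]
    obtain ⟨-, -, hdet, hdet'⟩ := h
    rw [posRpow_of_pos hdet, posRpow_of_pos hdet', betaDens, ENNReal.ofReal_mul (by positivity)]
  · rw [Set.indicator_of_notMem h]
    simp only [Omega, Set.mem_ofPred_eq, not_and_or, not_lt] at h
    rcases h with h | h | h | h
    · linarith
    · linarith
    · rw [posRpow_of_nonpos h, mul_zero]
    · rw [posRpow_of_nonpos h, zero_mul]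

lemma lintegral_lintegral_indicator_Omega_betaDens (α β x : ℝ) :
    ∫⁻ y, ∫⁻ z, Omega.indicator (fun p => ENNReal.ofReal (betaDens α β p)) (x, y, z)
      = posRpow (β - 1) x * posRpow (α - 1) (1 - x)
          * (oneSubSqLIntegral (α - 3/2) * betaLIntegral (β - 1/2) α) := by
  by_cases hx : 0 < x ∧ x < 1
  · obtain ⟨hx0, hx1⟩ := hx
    simp_rw [indicator_Omega_betaDens hx0 hx1, lintegral_lintegral_posRpow_det α β hx0 hx1,
      posRpow_of_pos hx0, posRpow_of_pos (sub_pos.2 hx1),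
      ← ENNReal.ofReal_mul (rpow_nonneg hx0.le _)]
  · have hout : ∀ y z, (x, y, z) ∉ Omega := fun y z h => hx ⟨h.1, by linarith [h.2.1]⟩
    have hzero : posRpow (β - 1) x * posRpow (α - 1) (1 - x) = 0 := by
      rw [not_and_or, not_lt, not_lt] at hx
      rcases hx with hx | hx
      · rw [posRpow_of_nonpos hx, zero_mul]
      · rw [posRpow_of_nonpos (t := 1 - x) (by linarith), mul_zero]
    simp [Set.indicator_of_notMem (hout _ _), hzero]

lemma setLIntegral_Omega_betaDens (α β : ℝ) :
    ∫⁻ p in Omega, ENNReal.ofReal (betaDens α β p)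
      = betaLIntegral β α * (oneSubSqLIntegral (α - 3/2) * betaLIntegral (β - 1/2) α) := by
  rw [← lintegral_indicator measurableSet_Omega,
    lintegral_prod_prod ((measurable_betaDens α β).ennreal_ofReal.indicator measurableSet_Omega)]
  simp_rw [lintegral_lintegral_indicator_Omega_betaDens]
  rw [lintegral_mul_const _ (by fun_prop)]
  rfl

lemma B2_eq_mul_beta_mul_beta {α β : ℝ} (hα : 0 < α) (hβ : 1/2 < β) :
    B2 α β = (oneSubSqLIntegral (α - 3/2)).toReal * (beta β α * beta (β - 1/2) α) := by
  have hnonneg : 0 ≤ᵐ[volume.restrict Omega] betaDens α β := by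
    filter_upwards [ae_restrict_mem measurableSet_Omega] with p hp
    exact mul_nonneg (rpow_nonneg hp.2.2.2.le _) (rpow_nonneg hp.2.2.1.le _)
  rw [B2, integral_eq_lintegral_of_nonneg_ae hnonneg (by fun_prop), setLIntegral_Omega_betaDens,
    betaLIntegral_eq (by linarith) hα, betaLIntegral_eq (by linarith) hα]
  simp only [ENNReal.toReal_mul]
  rw [ENNReal.toReal_ofReal (beta_pos (by linarith) hα).le,
    ENNReal.toReal_ofReal (beta_pos (by linarith) hα).le]
  ring

/-- B₂(α,β+1) = β(β−1/2)/((α+β)(α+β−1/2)) · B₂(α,β). -/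
theorem B2_beta_succ (α β : ℝ) (hα : 1/2 < α) (hβ : 1/2 < β) :
    B2 α (β + 1) = (β * (β - 1/2)) / ((α + β) * (α + β - 1/2)) * B2 α β := by
  have hα0 : 0 < α := by linarith
  have hβ0 : 0 < β := by linarith
  rw [B2_eq_mul_beta_mul_beta hα0 (by linarith), B2_eq_mul_beta_mul_beta hα0 hβ,
    show β + 1 - 1/2 = (β - 1/2) + 1 by ring, beta_add_one_left hβ0 hα0,
    beta_add_one_left (by linarith) hα0]
  field_simp
  ring
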